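/- arXiv:2311.08650 — 3 statements merged into one kernel-verified Lean document; each statement's English description precedes it below -/
import Mathlib

section
/- Let Ω be a compact subset of [0,∞) with min Ω > 0, and let J be a positive integer. For every continuous function V defined on the union over J' ≤ J of Ω^{J'} that is permutation invariant (i.e., V restricted to each Ω^{J'} is invariant under all permutations of its J' arguments), there exists a continuous function ψ : ℝ^J → ℝ such that for every J' ≤ J and all x₁,…,x_{J'} ∈ Ω, V(x₁,…,x_{J'}) = ψ(∑_{k=1}^{J'} x_k, ∑_{k=1}^{J'} x_k², …, ∑_{k=1}^{J'} x_k^J). -/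
/-!
Newton's identities show that the first `n` power sums of `n` numbers determine their
multiset. Padding with zeros does not change power sums of positive degree, so as `0 ∉ Ω` the
first `J` power sums of a tuple of length at most `J` determine its length and its entries up to
order. Hence `V` is constant on the fibres of the power-sum map on the compact disjoint union of
the `Ω^J'`; it descends to a continuous function on the (compact) image, since a continuous map
from a compact space onto a Hausdorff space is a quotient map, and Tietze extends it to `ℝ^J`.
-/

open Finset Topology

section PowerSums

variable {R : Type*} [CommRing R]

theorem Multiset.mul_esymm_eq_sum (s : Multiset R) (k : ℕ) :
    (k : R) * s.esymm k = (-1) ^ (k + 1) *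
      ∑ a ∈ HasAntidiagonal.antidiagonal k with a.1 < k,
        (-1) ^ a.1 * s.esymm a.1 * (s.map (· ^ a.2)).sum := by
  obtain ⟨n, x, rfl⟩ : ∃ n, ∃ x : Fin n → R, univ.val.map x = s :=
    ⟨_, s.toList.get, by rw [Fin.univ_val_map, List.ofFn_get, Multiset.coe_toList]⟩
  have h := congrArg (MvPolynomial.aeval x) (MvPolynomial.mul_esymm_eq_sum (Fin n) R k)
  simp only [map_mul, map_pow, map_neg, map_one, map_sum, map_natCast, MvPolynomial.psum,
    MvPolynomial.aeval_X, MvPolynomial.aeval_esymm_eq_multiset_esymm] at h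
  simpa only [Multiset.map_map, Finset.sum_eq_multiset_sum, Function.comp_def] using h

variable [IsDomain R] [CharZero R]

theorem Multiset.esymm_eq_of_sum_pow_eq {s t : Multiset R} {n : ℕ}
    (h : ∀ q ∈ Finset.Icc 1 n, (s.map (· ^ q)).sum = (t.map (· ^ q)).sum) {k : ℕ}
    (hk : k ≤ n) : s.esymm k = t.esymm k := by
  induction k using Nat.strong_induction_on with
  | _ k ih =>
    rcases k.eq_zero_or_pos with rfl | hk0
    · simp [Multiset.esymm]
    refine mul_left_cancel₀ (Nat.cast_ne_zero.2 hk0.ne') ?_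
    rw [Multiset.mul_esymm_eq_sum, Multiset.mul_esymm_eq_sum]
    congr 1
    refine sum_congr rfl fun a ha => ?_
    rw [Finset.mem_filter, HasAntidiagonal.mem_antidiagonal] at ha
    rw [ih a.1 ha.2 (by omega), h a.2 (Finset.mem_Icc.2 ⟨by omega, by omega⟩)]

open Polynomial in
theorem Multiset.eq_of_sum_pow_eq {s t : Multiset R} {n : ℕ} (hs : s.card = n) (ht : t.card = n)
    (h : ∀ q ∈ Finset.Icc 1 n, (s.map (· ^ q)).sum = (t.map (· ^ q)).sum) : s = t := by
  have hprod : (s.map fun a => X - C a).prod = (t.map fun a => X - C a).prod := by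
    rw [Multiset.prod_X_sub_X_eq_sum_esymm, Multiset.prod_X_sub_X_eq_sum_esymm, hs, ht]
    exact sum_congr rfl fun j hj => by
      rw [Multiset.esymm_eq_of_sum_pow_eq h (Nat.lt_succ_iff.1 (mem_range.1 hj))]
  simpa using congrArg roots hprod

theorem Multiset.eq_of_sum_pow_eq_of_zero_notMem {s t : Multiset R} {n : ℕ} (hs : s.card ≤ n)
    (ht : t.card ≤ n) (hs0 : 0 ∉ s) (ht0 : 0 ∉ t)
    (h : ∀ q ∈ Finset.Icc 1 n, (s.map (· ^ q)).sum = (t.map (· ^ q)).sum) : s = t := by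
  classical
  have hpad : s + .replicate (n - s.card) 0 = t + .replicate (n - t.card) 0 := by
    refine Multiset.eq_of_sum_pow_eq (n := n) (by simp; omega) (by simp; omega) fun q hq => ?_
    have hq0 : q ≠ 0 := by rw [Finset.mem_Icc] at hq; omega
    simp [hq0, h q hq]
  have := congrArg (Multiset.filter (· ≠ 0)) hpad
  simpa [Multiset.filter_add, Multiset.filter_eq_self.2 (fun a ha => ne_of_mem_of_not_mem ha hs0),
    Multiset.filter_eq_self.2 (fun a ha => ne_of_mem_of_not_mem ha ht0),
    Multiset.filter_eq_nil.2 (fun a ha => not_not.2 (Multiset.eq_of_mem_replicate ha))] using this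

end PowerSums

universe u v

theorem exists_continuous_comp_eq {X : Type*} {Y : Type u} {Z : Type v} [TopologicalSpace X]
    [CompactSpace X] [TopologicalSpace Y] [T4Space Y] [TopologicalSpace Z]
    [TietzeExtension.{u, v} Z] {F : X → Y} (hF : Continuous F) {W : X → Z} (hW : Continuous W)
    (hFW : ∀ a b, F a = F b → W a = W b) :
    ∃ ψ : Y → Z, Continuous ψ ∧ ∀ a, ψ (F a) = W a := by
  let F' : C(X, Set.range F) := ⟨Set.rangeFactorization F, hF.subtype_mk _⟩
  have hq : IsQuotientMap F' :=
    .of_surjective_continuous Set.rangeFactorization_surjective F'.continuous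
  let W' : C(X, Z) := ⟨W, hW⟩
  have hfac : Function.FactorsThrough W' F' := fun a b hab => hFW a b (congrArg Subtype.val hab)
  let g := hq.lift W' hfac
  obtain ⟨ψ, hψ⟩ := g.exists_restrict_eq (isCompact_range hF).isClosed
  refine ⟨ψ, ψ.continuous, fun a => ?_⟩
  calc ψ (F a) = g (F' a) := DFunLike.congr_fun hψ (F' a)
    _ = W a := DFunLike.congr_fun (hq.lift_comp W' hfac) a

theorem Fin.exists_perm_comp_eq_of_univ_map_eq {α : Type*} [LinearOrder α] {n : ℕ}
    {x y : Fin n → α} (h : univ.val.map x = univ.val.map y) :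
    ∃ σ : Equiv.Perm (Fin n), x ∘ σ = y := by
  rw [Fin.univ_val_map, Fin.univ_val_map, Multiset.coe_eq_coe] at h
  have hsorted : x ∘ Tuple.sort x = y ∘ Tuple.sort y :=
    List.ofFn_injective <| List.Perm.eq_of_sortedLE (Tuple.monotone_sort x).sortedLE_ofFn
      (Tuple.monotone_sort y).sortedLE_ofFn <|
        ((Tuple.sort x).ofFn_comp_perm x).trans (h.trans ((Tuple.sort y).ofFn_comp_perm y).symm)
  refine ⟨(Tuple.sort y)⁻¹.trans (Tuple.sort x), funext fun i => ?_⟩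
  simpa using congrFun hsorted ((Tuple.sort y)⁻¹ i)

/-- The domain `⋃_{J' ≤ J} Ω^J'`, as a topological disjoint union. -/
abbrev BoundedTuples {α : Type*} (J : ℕ) (Ω : Set α) :=
  Σ n : Fin (J + 1), {x : Fin n → α // ∀ j, x j ∈ Ω}

theorem compactSpace_boundedTuples {α : Type*} [TopologicalSpace α] (J : ℕ) {Ω : Set α}
    (hΩ : IsCompact Ω) : CompactSpace (BoundedTuples J Ω) := by
  have (n : Fin (J + 1)) : CompactSpace {x : Fin n → α // ∀ j, x j ∈ Ω} := by
    have hK : IsCompact {x : Fin n → α | ∀ j, x j ∈ Ω} := by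
      simpa [Set.pi] using isCompact_univ_pi fun _ : Fin n => hΩ
    exact isCompact_iff_compactSpace.1 hK
  infer_instance

def powerSums {R : Type*} [CommSemiring R] (J : ℕ) {n : ℕ} (x : Fin n → R) : Fin J → R :=
  fun q => ∑ k, x k ^ ((q : ℕ) + 1)

theorem continuous_powerSums {R : Type*} [CommSemiring R] [TopologicalSpace R]
    [IsTopologicalSemiring R] (J n : ℕ) : Continuous (powerSums (R := R) J (n := n)) := by
  unfold powerSums
  fun_prop

theorem eq_and_univ_map_eq_of_powerSums_eq {R : Type*} [CommRing R] [IsDomain R] [CharZero R]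
    {J a b : ℕ} (ha : a ≤ J) (hb : b ≤ J) {x : Fin a → R} {y : Fin b → R}
    (hx : ∀ i, x i ≠ 0) (hy : ∀ i, y i ≠ 0) (h : powerSums J x = powerSums J y) :
    a = b ∧ univ.val.map x = univ.val.map y := by
  have hmap : univ.val.map x = univ.val.map y := by
    refine Multiset.eq_of_sum_pow_eq_of_zero_notMem (n := J) (by simpa) (by simpa) (by simpa)
      (by simpa) fun q hq => ?_
    obtain ⟨hq1, hqJ⟩ := mem_Icc.1 hq
    have hq := congrFun h ⟨q - 1, by omega⟩
    simp only [powerSums, Nat.sub_add_cancel hq1] at hq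
    rw [Multiset.map_map, Multiset.map_map]
    exact hq
  exact ⟨by simpa using congrArg Multiset.card hmap, hmap⟩

theorem stmt_0_general (J : ℕ)
    (Ω : Set ℝ) (hΩc : IsCompact Ω)
    (m : ℝ) (hmin : ∀ x ∈ Ω, m ≤ x) (hmpos : 0 < m)
    (V : (J' : ℕ) → (Fin J' → ℝ) → ℝ)
    (hVperm : ∀ J', J' ≤ J → ∀ x : Fin J' → ℝ, (∀ j, x j ∈ Ω) →
      ∀ σ : Equiv.Perm (Fin J'), V J' (x ∘ σ) = V J' x)
    (hVcont : ∀ J', J' ≤ J → ContinuousOn (V J') {x | ∀ j, x j ∈ Ω}) :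
    ∃ ψ : (Fin J → ℝ) → ℝ, Continuous ψ ∧
      ∀ J', J' ≤ J → ∀ x : Fin J' → ℝ, (∀ j, x j ∈ Ω) →
        V J' x = ψ (fun q => ∑ k, x k ^ ((q : ℕ) + 1)) := by
  have := compactSpace_boundedTuples J hΩc
  have hne : ∀ x ∈ Ω, x ≠ 0 := fun x hx => (hmpos.trans_le (hmin x hx)).ne'
  have hfib : ∀ s t : BoundedTuples J Ω,
      powerSums J s.2.1 = powerSums J t.2.1 → V s.1 s.2.1 = V t.1 t.2.1 := by
    rintro ⟨a, x, hx⟩ ⟨b, y, hy⟩ hxy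
    obtain ⟨hab, hmap⟩ := eq_and_univ_map_eq_of_powerSums_eq a.is_le b.is_le
      (fun i => hne _ (hx i)) (fun i => hne _ (hy i)) hxy
    obtain rfl := Fin.ext hab
    obtain ⟨σ, rfl⟩ := Fin.exists_perm_comp_eq_of_univ_map_eq hmap
    exact (hVperm a a.is_le x hx σ).symm
  obtain ⟨ψ, hψ, hψV⟩ := exists_continuous_comp_eq
    (F := fun t : BoundedTuples J Ω => powerSums J t.2.1) (W := fun t => V t.1 t.2.1)
    (continuous_sigma fun _ => (continuous_powerSums J _).comp continuous_subtype_val)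
    (continuous_sigma fun n => (hVcont n n.is_le).domRestrict) hfib
  exact ⟨ψ, hψ, fun J' hJ' x hx => (hψV ⟨⟨J', by omega⟩, x, hx⟩).symm⟩

/-- variable-size symmetric representation, one-dimensional case. -/
theorem stmt_0 (J : ℕ) (hJ : 0 < J)
    (Ω : Set ℝ) (hΩc : IsCompact Ω)
    (hΩnn : ∀ x ∈ Ω, 0 ≤ x)
    (m : ℝ) (hmΩ : m ∈ Ω) (hmin : ∀ x ∈ Ω, m ≤ x) (hmpos : 0 < m)
    (V : (J' : ℕ) → (Fin J' → ℝ) → ℝ)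
    (hVperm : ∀ J', J' ≤ J → ∀ x : Fin J' → ℝ, (∀ j, x j ∈ Ω) →
      ∀ σ : Equiv.Perm (Fin J'), V J' (x ∘ σ) = V J' x)
    (hVcont : ∀ J', J' ≤ J → ContinuousOn (V J') {x | ∀ j, x j ∈ Ω}) :
    ∃ ψ : (Fin J → ℝ) → ℝ, Continuous ψ ∧
      ∀ J', J' ≤ J → ∀ x : Fin J' → ℝ, (∀ j, x j ∈ Ω) →
        V J' x = ψ (fun q => ∑ k, x k ^ ((q : ℕ) + 1)) :=
  stmt_0_general J Ω hΩc m hmin hmpos V hVperm hVcont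
end

section
/- Let Ω be a compact subset of [0,∞)^I containing 0, and let V be a continuous permutation invariant function on the union over J' ≤ J of Ω^{J'} satisfying the padding condition V(x₁,…,x_{J'}, 0,…,0) = V(x₁,…,x_{J'}) for any number of appended zero vectors (up to total length J). Then there exists a continuous function ψ : ℝ^{κ(I,J)} → ℝ such that V({x_j}_{j∈𝒥}) = ψ(∑_{k∈𝒥} η_{I,J}(x_k)) for all |𝒥| ≤ J, where η_{I,J} is the multisymmetric power sum map of degree up to J and κ(I,J) = binom(J+I,I) − 1. -/
/-!
On `Ωᴶ` the value of `V` depends only on the multiset of arguments, and the sum of the `η(x_k)`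
determines that multiset: a generic linear form `t ⬝ᵥ ·` is injective on the finitely many points
involved, polarization turns the multisymmetric power sums into the ordinary power sums of degree
`≤ J` of the `J` reals `t ⬝ᵥ x_k`, and Newton's identities recover their elementary symmetric
functions, hence the multiset. Thus `V` descends along the closed quotient map from the compact set
`Ωᴶ` onto its image, and Tietze extends the descended function to the whole space. Shorter inputs
are padded with zeros, which is harmless because `η(0) = 0`.
-/

/-- Index set of the multisymmetric power sums of degree 1..J in I variables;
its cardinality is κ(I,J) = binom(J+I,I) - 1. -/
def MIdx (I J : ℕ) := {s : Fin I → ℕ // 1 ≤ ∑ i, s i ∧ ∑ i, s i ≤ J}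

/-- The multisymmetric power sum map η_{I,J}. -/
noncomputable def eta (I J : ℕ) (x : Fin I → ℝ) : MIdx I J → ℝ :=
  fun s => ∏ i, x i ^ s.val i

open Finset

theorem Multiset.eq_of_card_eq_of_esymm_eq {R : Type*} [CommRing R] [IsDomain R]
    {s t : Multiset R} (hcard : card s = card t) (h : ∀ j ≤ card s, s.esymm j = t.esymm j) :
    s = t := by
  rw [← Polynomial.roots_multiset_prod_X_sub_C s, ← Polynomial.roots_multiset_prod_X_sub_C t,
    Multiset.prod_X_sub_X_eq_sum_esymm, Multiset.prod_X_sub_X_eq_sum_esymm, ← hcard]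
  refine congrArg _ (Finset.sum_congr rfl fun j hj => ?_)
  rw [h j (Nat.lt_succ_iff.mp (Finset.mem_range.mp hj))]

theorem MvPolynomial.aeval_esymm_eq_of_sum_pow_eq {σ K : Type*} [Fintype σ] [Field K]
    [CharZero K] {a b : σ → K} {n : ℕ}
    (h : ∀ m, 1 ≤ m → m ≤ n → ∑ i, a i ^ m = ∑ i, b i ^ m) {j : ℕ} (hj : j ≤ n) :
    aeval a (esymm σ K j) = aeval b (esymm σ K j) := by
  induction j using Nat.strong_induction_on with
  | _ j ih =>
  rcases j.eq_zero_or_pos with rfl | hpos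
  · simp
  have newton (c : σ → K) := congrArg (aeval c) (mul_esymm_eq_sum σ K j)
  simp only [map_mul, map_natCast, map_sum, map_pow, map_neg, map_one, psum, aeval_X] at newton
  apply mul_left_cancel₀ (Nat.cast_ne_zero.mpr hpos.ne' : (j : K) ≠ 0)
  rw [newton a, newton b]
  congr 1
  refine Finset.sum_congr rfl fun p hp => ?_
  obtain ⟨hsum, hlt⟩ : p.1 + p.2 = j ∧ p.1 < j := by simpa using hp
  rw [ih p.1 hlt (by omega), h p.2 (by omega) (by omega)]

theorem Multiset.map_univ_eq_of_sum_pow_eq {σ K : Type*} [Fintype σ] [Field K] [CharZero K]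
    {a b : σ → K} (h : ∀ m, 1 ≤ m → m ≤ Fintype.card σ → ∑ i, a i ^ m = ∑ i, b i ^ m) :
    univ.val.map a = univ.val.map b :=
  Multiset.eq_of_card_eq_of_esymm_eq (by simp) fun j hj => by
    rw [← MvPolynomial.aeval_esymm_eq_multiset_esymm σ K,
      ← MvPolynomial.aeval_esymm_eq_multiset_esymm σ K]
    exact MvPolynomial.aeval_esymm_eq_of_sum_pow_eq h (by simpa using hj)

theorem exists_perm_eq_comp_of_map_univ_eq {ι α : Type*} [Fintype ι] {a b : ι → α}
    (h : univ.val.map a = univ.val.map b) : ∃ σ : Equiv.Perm ι, a = b ∘ σ := by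
  classical
  have hfiber (c : α) : Fintype.card {i // a i = c} = Fintype.card {i // b i = c} := by
    have := congrArg (Multiset.countP (· = c)) h
    rw [Multiset.countP_map, Multiset.countP_map] at this
    simpa only [Fintype.card_subtype, Finset.card_def, Finset.filter_val] using this
  exact ⟨Equiv.ofFiberEquiv fun c => Fintype.equivOfCardEq (hfiber c),
    funext fun i => (Equiv.ofFiberEquiv_map _ i).symm⟩

theorem exists_forall_dotProduct_eq_imp_eq {ι n K : Type*} [Finite ι] [Fintype n]
    [DecidableEq n] [Field K] [Infinite K] (v : ι → n → K) :
    ∃ t : n → K, ∀ a b, t ⬝ᵥ v a = t ⬝ᵥ v b → v a = v b := by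
  by_contra! hcov
  let P : {ab : ι × ι // v ab.1 ≠ v ab.2} → Subspace K (n → K) :=
    fun ab => LinearMap.ker (dotProductEquiv K n (v ab.1.1 - v ab.1.2))
  obtain ⟨⟨⟨a, b⟩, hab⟩, htop⟩ := Subspace.exists_eq_top_of_iUnion_eq_univ (p := P) <|
    Set.eq_univ_of_forall fun t => by
      obtain ⟨a, b, heq, hne⟩ := hcov t
      refine Set.mem_iUnion.mpr ⟨⟨(a, b), hne⟩, ?_⟩
      simp [P, dotProduct_comm, heq]
  refine hab (sub_eq_zero.mp (dotProduct_eq_zero_iff.mp fun t => ?_))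
  simpa [P] using (LinearMap.ker_eq_top.mp htop ▸ rfl : dotProductEquiv K n (v a - v b) t = 0)

theorem sum_dotProduct_pow_eq_of_sum_prod_pow_eq {R ι κ : Type*} [CommSemiring R] [Fintype ι]
    [DecidableEq ι] [Fintype κ] {x y : κ → ι → R} {m : ℕ}
    (h : ∀ s ∈ piAntidiag univ m, ∑ k, ∏ i, x k i ^ s i = ∑ k, ∏ i, y k i ^ s i) (t : ι → R) :
    ∑ k, (t ⬝ᵥ x k) ^ m = ∑ k, (t ⬝ᵥ y k) ^ m := by
  have expand (z : κ → ι → R) : ∑ k, (t ⬝ᵥ z k) ^ m = ∑ s ∈ piAntidiag univ m,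
      (Nat.multinomial univ s : R) * (∏ i, t i ^ s i) * ∑ k, ∏ i, z k i ^ s i := by
    simp_rw [dotProduct, sum_pow_eq_sum_piAntidiag, mul_pow, prod_mul_distrib, mul_sum]
    rw [sum_comm]
    simp only [mul_assoc]
  rw [expand x, expand y]
  exact sum_congr rfl fun s hs => by rw [h s hs]

universe v w

theorem ContinuousOn.exists_continuousMap_comp_eq {X : Type*} {Y : Type v} {Z : Type w}
    [TopologicalSpace X] [TopologicalSpace Y] [T2Space Y] [NormalSpace Y]
    [TopologicalSpace Z] [TietzeExtension.{v} Z]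
    {K : Set X} {f : X → Z} {Φ : X → Y} (hf : ContinuousOn f K) (hK : IsCompact K)
    (hΦ : ContinuousOn Φ K) (hfib : ∀ x ∈ K, ∀ y ∈ K, Φ x = Φ y → f x = f y) :
    ∃ g : C(Y, Z), ∀ x ∈ K, f x = g (Φ x) := by
  have : CompactSpace K := isCompact_iff_compactSpace.mp hK
  let π : C(K, Φ '' K) := ⟨_, hΦ.mapsToRestrict (Set.mapsTo_image Φ K)⟩
  have hq : Topology.IsQuotientMap π := π.continuous.isClosedMap.isQuotientMap π.continuous <| by
    rintro ⟨_, x, hx, rfl⟩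
    exact ⟨⟨x, hx⟩, rfl⟩
  let F : C(K, Z) := ⟨K.domRestrict f, hf.domRestrict⟩
  have hF : Function.FactorsThrough F π := fun x y hxy =>
    hfib x x.2 y y.2 (Subtype.ext_iff.mp hxy)
  obtain ⟨g, hg⟩ := (hq.lift F hF).exists_restrict_eq (hK.image_of_continuousOn hΦ).isClosed
  refine ⟨g, fun x hx => ?_⟩
  calc f x = hq.lift F hF (π ⟨x, hx⟩) := (DFunLike.congr_fun (hq.lift_comp F hF) ⟨x, hx⟩).symm
    _ = g (Φ x) := by rw [← hg]; rfl

lemma eta_zero (I J : ℕ) : eta I J 0 = 0 := by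
  funext s
  obtain ⟨i, hi⟩ : ∃ i, s.val i ≠ 0 := by
    by_contra! h
    simpa [h] using s.2.1
  exact prod_eq_zero (mem_univ i) (by simp [hi])

lemma continuous_sum_eta (I J n : ℕ) :
    Continuous fun x : Fin n → Fin I → ℝ => ∑ k, eta I J (x k) := by
  unfold eta
  fun_prop

theorem exists_perm_of_sum_eta_eq {I J : ℕ} {x y : Fin J → Fin I → ℝ}
    (h : ∑ k, eta I J (x k) = ∑ k, eta I J (y k)) : ∃ σ : Equiv.Perm (Fin J), x = y ∘ σ := by
  obtain ⟨t, ht⟩ := exists_forall_dotProduct_eq_imp_eq (Sum.elim x y)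
  have hpow : ∀ m, 1 ≤ m → m ≤ Fintype.card (Fin J) →
      ∑ k, (t ⬝ᵥ x k) ^ m = ∑ k, (t ⬝ᵥ y k) ^ m := by
    intro m hm hmJ
    refine sum_dotProduct_pow_eq_of_sum_prod_pow_eq (fun s hs => ?_) t
    have hs : ∑ i, s i = m := (mem_piAntidiag.mp hs).1
    obtain ⟨s, rfl⟩ : ∃ s' : MIdx I J, s'.val = s :=
      ⟨⟨s, by simp only [Fintype.card_fin] at hmJ; omega⟩, rfl⟩
    simpa [eta] using congrFun h s
  obtain ⟨σ, hσ⟩ := exists_perm_eq_comp_of_map_univ_eq (Multiset.map_univ_eq_of_sum_pow_eq hpow)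
  exact ⟨σ, funext fun k => ht (.inl k) (.inr (σ k)) (congrFun hσ k)⟩

lemma Fin.sum_dite_lt_eq_sum {M α : Type*} [AddCommMonoid M] [Zero α] {f : α → M}
    (hf : f 0 = 0) {m n : ℕ} (hmn : m ≤ n) (x : Fin m → α) :
    ∑ j : Fin n, f (if h : (j : ℕ) < m then x ⟨j, h⟩ else 0) = ∑ k, f (x k) := by
  obtain ⟨d, rfl⟩ := Nat.exists_eq_add_of_le hmn
  simp [Fin.sum_univ_add, hf]

theorem stmt_2_general (I J : ℕ)
    (Ω : Set (Fin I → ℝ)) (hΩc : IsCompact Ω)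
    (hΩ0 : (0 : Fin I → ℝ) ∈ Ω)
    (V : (J' : ℕ) → (Fin J' → (Fin I → ℝ)) → ℝ)
    (hVperm : ∀ J', J' ≤ J → ∀ x : Fin J' → (Fin I → ℝ), (∀ j, x j ∈ Ω) →
      ∀ σ : Equiv.Perm (Fin J'), V J' (x ∘ σ) = V J' x)
    (hVcont : ∀ J', J' ≤ J → ContinuousOn (V J') {x | ∀ j, x j ∈ Ω})
    (hVpad : ∀ J' J'', J' ≤ J'' → J'' ≤ J → ∀ x : Fin J' → (Fin I → ℝ),
      (∀ j, x j ∈ Ω) →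
      V J'' (fun j => if h : (j : ℕ) < J' then x ⟨j, h⟩ else 0) = V J' x) :
    ∃ ψ : (MIdx I J → ℝ) → ℝ, Continuous ψ ∧
      ∀ J', J' ≤ J → ∀ x : Fin J' → (Fin I → ℝ), (∀ j, x j ∈ Ω) →
        V J' x = ψ (∑ k, eta I J (x k)) := by
  -- makes `MIdx I J → ℝ` metrizable, hence normal, as Tietze extension requires
  have : Countable (MIdx I J) := by unfold MIdx; infer_instance
  have hK : IsCompact {x : Fin J → Fin I → ℝ | ∀ j, x j ∈ Ω} := by
    simpa [Set.pi] using isCompact_univ_pi fun _ : Fin J => hΩc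
  obtain ⟨ψ, hψ⟩ := (hVcont J le_rfl).exists_continuousMap_comp_eq hK
    (continuous_sum_eta I J J).continuousOn fun x _ y hy hxy => by
      obtain ⟨σ, rfl⟩ := exists_perm_of_sum_eta_eq hxy
      exact hVperm J le_rfl y hy σ
  refine ⟨ψ, ψ.continuous, fun J' hJ' x hx => ?_⟩
  have hpad : ∀ j : Fin J, (if h : (j : ℕ) < J' then x ⟨j, h⟩ else 0) ∈ Ω := fun j => by
    split_ifs
    exacts [hx _, hΩ0]
  rw [← hVpad J' J hJ' le_rfl x hx, hψ _ hpad, Fin.sum_dite_lt_eq_sum (eta_zero I J) hJ']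

/-- variable-size symmetric representation under
condition (b): zero padding does not change the value of V. -/
theorem stmt_2 (I J : ℕ) (hJ : 0 < J)
    (Ω : Set (Fin I → ℝ)) (hΩc : IsCompact Ω)
    (hΩnn : ∀ x ∈ Ω, ∀ i, 0 ≤ x i)
    (hΩ0 : (0 : Fin I → ℝ) ∈ Ω)
    (V : (J' : ℕ) → (Fin J' → (Fin I → ℝ)) → ℝ)
    (hVperm : ∀ J', J' ≤ J → ∀ x : Fin J' → (Fin I → ℝ), (∀ j, x j ∈ Ω) →
      ∀ σ : Equiv.Perm (Fin J'), V J' (x ∘ σ) = V J' x)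
    (hVcont : ∀ J', J' ≤ J → ContinuousOn (V J') {x | ∀ j, x j ∈ Ω})
    (hVpad : ∀ J' J'', J' ≤ J'' → J'' ≤ J → ∀ x : Fin J' → (Fin I → ℝ),
      (∀ j, x j ∈ Ω) →
      V J'' (fun j => if h : (j : ℕ) < J' then x ⟨j, h⟩ else 0) = V J' x) :
    ∃ ψ : (MIdx I J → ℝ) → ℝ, Continuous ψ ∧
      ∀ J', J' ≤ J → ∀ x : Fin J' → (Fin I → ℝ), (∀ j, x j ∈ Ω) →
        V J' x = ψ (∑ k, eta I J (x k)) :=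
  stmt_2_general I J Ω hΩc hΩ0 V hVperm hVcont hVpad
end

section
/- Let Ω be a compact subset of [0,∞)^I with m := min Ω > 0_I (componentwise), and set Ω̂ := Ω ∪ ∏_{i=1}^I [0, m_i]. Given a continuous permutation invariant function V on the union over J' ≤ J of Ω^{J'}, define a(x) := ∏_i min{1, x^{(i)}/m^{(i)}} and b(x) := ∏_i max{0, (m^{(i)} − x^{(i)})/m^{(i)}} for x ∈ [0,∞)^I, and define V̄ on Ω̂^J by V̄(x₁,…,x_J) := ∑_{𝒥̃} [∏_{j∈𝒥̃} a(x_j)]·[∏_{j∉𝒥̃} b(x_j)]·V({max(x_j, m)}_{j∈𝒥̃}), where the sum ranges over all subsets 𝒥̃ of {1,…,J} containing {j : x_j ∈ Ω} and max is taken componentwise. Then V̄ is continuous on Ω̂^J. -/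
/-- The weight a(x) = ∏_i min{1, x_i/m_i}. -/
noncomputable def weightA (I : ℕ) (m x : Fin I → ℝ) : ℝ :=
  ∏ i, min 1 (x i / m i)

/-- The weight b(x) = ∏_i max{0, (m_i - x_i)/m_i}. -/
noncomputable def weightB (I : ℕ) (m x : Fin I → ℝ) : ℝ :=
  ∏ i, max 0 ((m i - x i) / m i)

open Classical in
/-- The extension V̄ of a variable-size function V to fixed-size J-tuples:
a weighted blend over all subsets 𝒥̃ of {1,…,J} containing {j : x_j ∈ Ω}. -/
noncomputable def Vbar (I J : ℕ) (Ω : Set (Fin I → ℝ)) (m : Fin I → ℝ)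
    (V : (J' : ℕ) → (Fin J' → (Fin I → ℝ)) → ℝ)
    (x : Fin J → (Fin I → ℝ)) : ℝ :=
  ∑ T : Finset (Fin J),
    if ∀ j, x j ∈ Ω → j ∈ T then
      (∏ j ∈ T, weightA I m (x j)) * (∏ j ∈ Tᶜ, weightB I m (x j)) *
        V T.card (fun k i => max (x ((T.orderIsoOfFin rfl k : T) : Fin J) i) (m i))
    else 0

/-- the extension V̄ is continuous on Ω̂^J, where
Ω̂ = Ω ∪ ∏_i [0, m_i]. -/
theorem stmt_8 (I J : ℕ) (hJ : 0 < J)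
    (Ω : Set (Fin I → ℝ)) (hΩc : IsCompact Ω)
    (hΩnn : ∀ x ∈ Ω, ∀ i, 0 ≤ x i)
    (m : Fin I → ℝ) (hmΩ : m ∈ Ω) (hmin : ∀ x ∈ Ω, ∀ i, m i ≤ x i)
    (hmpos : ∀ i, 0 < m i)
    (V : (J' : ℕ) → (Fin J' → (Fin I → ℝ)) → ℝ)
    (hVperm : ∀ J', J' ≤ J → ∀ x : Fin J' → (Fin I → ℝ), (∀ j, x j ∈ Ω) →
      ∀ σ : Equiv.Perm (Fin J'), V J' (x ∘ σ) = V J' x)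
    (hVcont : ∀ J', J' ≤ J → ContinuousOn (V J') {x | ∀ j, x j ∈ Ω}) :
    ContinuousOn (Vbar I J Ω m V)
      {x : Fin J → (Fin I → ℝ) |
        ∀ j, x j ∈ Ω ∪ {z | ∀ i, 0 ≤ z i ∧ z i ≤ m i}} := by
  classical
  rcases Nat.eq_zero_or_pos I with hI0 | hI0
  · subst hI0
    have h : Vbar 0 J Ω m V = fun _ => Vbar 0 J Ω m V default :=
      funext fun x => by rw [Subsingleton.elim x default]
    rw [h]; exact continuousOn_const
  set D := {x : Fin J → (Fin I → ℝ) |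
      ∀ j, x j ∈ Ω ∪ {z | ∀ i, 0 ≤ z i ∧ z i ≤ m i}} with hD
  set i0 : Fin I := ⟨0, hI0⟩
  have hbzero : ∀ z ∈ Ω, weightB I m z = 0 := by
    intro z hz
    refine Finset.prod_eq_zero (Finset.mem_univ i0) ?_
    have h1 : (m i0 - z i0) / m i0 ≤ 0 :=
      div_nonpos_of_nonpos_of_nonneg (by linarith [hmin z hz i0]) (hmpos i0).le
    exact max_eq_left h1
  have hA : Continuous (weightA I m) := by
    apply continuous_finset_prod
    intro i _
    exact continuous_const.min ((continuous_apply i).div_const _)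
  have hB : Continuous (weightB I m) := by
    apply continuous_finset_prod
    intro i _
    exact continuous_const.max ((continuous_const.sub (continuous_apply i)).div_const _)
  set g : Finset (Fin J) → (Fin J → Fin I → ℝ) → ℝ := fun T x =>
    (∏ j ∈ T, weightA I m (x j)) * (∏ j ∈ Tᶜ, weightB I m (x j)) *
      V T.card (fun k i => max (x ((T.orderIsoOfFin rfl k : T) : Fin J) i) (m i)) with hg
  have hgcont : ∀ T : Finset (Fin J), ContinuousOn (g T) D := by
    intro T
    have hcard : T.card ≤ J := le_trans (Finset.card_le_univ T) (by simp)
    have hφ : Continuous fun (x : Fin J → Fin I → ℝ) =>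
        (fun k i => max (x ((T.orderIsoOfFin rfl k : T) : Fin J) i) (m i)) := by
      apply continuous_pi; intro k
      apply continuous_pi; intro i
      exact ((continuous_apply i).comp (continuous_apply _)).max continuous_const
    have key : ∀ z : Fin I → ℝ, z ∈ Ω ∪ {z | ∀ i, 0 ≤ z i ∧ z i ≤ m i} →
        (fun i => max (z i) (m i)) ∈ Ω := by
      intro z hz
      rcases hz with hΩ | hbox
      · have : (fun i => max (z i) (m i)) = z :=
          funext fun i => max_eq_left (hmin _ hΩ i)
        rw [this]; exact hΩ
      · have : (fun i => max (z i) (m i)) = m :=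
          funext fun i => max_eq_right (hbox i).2
        rw [this]; exact hmΩ
    have hmaps : ∀ x ∈ D,
        (fun k i => max (x ((T.orderIsoOfFin rfl k : T) : Fin J) i) (m i)) ∈
          {y : Fin T.card → Fin I → ℝ | ∀ k, y k ∈ Ω} := by
      intro x hx k
      exact key _ (hx _)
    have hVcomp : ContinuousOn (fun x : Fin J → Fin I → ℝ =>
        V T.card (fun k i => max (x ((T.orderIsoOfFin rfl k : T) : Fin J) i) (m i))) D :=
      (hVcont T.card hcard).comp hφ.continuousOn hmaps
    have hprodA : Continuous fun x : Fin J → Fin I → ℝ => ∏ j ∈ T, weightA I m (x j) :=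
      continuous_finset_prod T fun j _ => hA.comp (continuous_apply j)
    have hprodB : Continuous fun x : Fin J → Fin I → ℝ => ∏ j ∈ Tᶜ, weightB I m (x j) :=
      continuous_finset_prod Tᶜ fun j _ => hB.comp (continuous_apply j)
    exact ((hprodA.mul hprodB).continuousOn).mul hVcomp
  have hFcont : ContinuousOn (fun x => ∑ T : Finset (Fin J), g T x) D :=
    continuousOn_finset_sum _ fun T _ => hgcont T
  refine hFcont.congr ?_
  intro x hx
  show Vbar I J Ω m V x = ∑ T : Finset (Fin J), g T x
  unfold Vbar
  refine Finset.sum_congr rfl ?_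
  intro T _
  by_cases h : ∀ j, x j ∈ Ω → j ∈ T
  · rw [if_pos h]
  · rw [if_neg h]
    push_neg at h
    obtain ⟨j, hjΩ, hjT⟩ := h
    have hz : (∏ j' ∈ Tᶜ, weightB I m (x j')) = 0 :=
      Finset.prod_eq_zero (Finset.mem_compl.mpr hjT) (hbzero _ hjΩ)
    simp [hg, hz]
end
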